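/- Let M ⊆ B(H) be a von Neumann algebra, ψ ∈ H a unit vector, and R a contraction in M_d ⊗ M. Let P be the orthogonal projection of H onto the closure of {Y ψ : Y ∈ M'}, P' the orthogonal projection onto the closure of {X ψ : X ∈ M}, and Q = P P'. Then the following are equivalent: (i) ⟨(R i 0)* X (R j 0) ψ, ψ⟩ = (if i = j then (α i)^2 else 0) · ⟨X ψ, ψ⟩ for all X ∈ M, i, j ∈ Fin d; (ii) ⟨(P (R i 0) P)* (P X P) (P (R j 0) P) ψ, ψ⟩ = (if i = j then (α i)^2 else 0) · ⟨P X P ψ, ψ⟩ for all X ∈ M, i, j ∈ Fin d; (iii) the same condition with P replaced by P'; (iv) the same condition with P replaced by Q. (That is, a monopartite exact embezzlement protocol compresses to one on P M P, on P' M P', and on Q M Q, and conversely.) -/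

import Mathlib

open scoped InnerProductSpace
open ContinuousLinearMap

/-- The block operator on `ℓ²(Fin d; H)` associated with a `d × d` matrix of operators on `H`,
acting by `(R x) i = ∑ j, (R i j) (x j)`. -/
noncomputable def blockOp {H : Type*} [NormedAddCommGroup H] [InnerProductSpace ℂ H] {d : ℕ}
    (R : Fin d → Fin d → H →L[ℂ] H) :
    (PiLp 2 fun _ : Fin d => H) →L[ℂ] (PiLp 2 fun _ : Fin d => H) :=
  (((PiLp.continuousLinearEquiv 2 ℂ (fun _ : Fin d => H)).symm :
      (∀ _ : Fin d, H) →L[ℂ] (PiLp 2 fun _ : Fin d => H))) ∘L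
    (ContinuousLinearMap.pi fun i => ∑ j, (R i j) ∘L (ContinuousLinearMap.proj j)) ∘L
    (((PiLp.continuousLinearEquiv 2 ℂ (fun _ : Fin d => H)) :
      (PiLp 2 fun _ : Fin d => H) →L[ℂ] (∀ _ : Fin d, H)))

variable {H : Type*} [NormedAddCommGroup H] [InnerProductSpace ℂ H] [CompleteSpace H]

/-- `R` is a contraction in `M_d ⊗ M`: all blocks lie in `M` and the block operator on
`ℓ²(Fin d; H)` has operator norm at most `1`. -/
def IsContractionIn (M : VonNeumannAlgebra H) {d : ℕ}
    (R : Fin d → Fin d → H →L[ℂ] H) : Prop :=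
  (∀ i j, R i j ∈ M) ∧ ‖blockOp R‖ ≤ 1

/-- A bipartite exact embezzlement protocol for `α` in `(M, M', H)`: `R` is a contraction in
`M_d ⊗ M`, `T` is a contraction with blocks in the commutant `M'`, `ψ` is a unit vector, and
`(R i 0)(T j 0) ψ = δ_{ij} α i • ψ` for all `i, j`. -/
def BipartiteProtocol (M : VonNeumannAlgebra H) {d : ℕ} [NeZero d] (α : Fin d → ℝ)
    (R T : Fin d → Fin d → H →L[ℂ] H) (ψ : H) : Prop :=
  IsContractionIn M R ∧ IsContractionIn M.commutant T ∧ ‖ψ‖ = 1 ∧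
    ∀ i j, (R i 0) ((T j 0) ψ) = (if i = j then (α i : ℂ) else 0) • ψ

/-- A monopartite exact embezzlement protocol for `α` in `(M, H)`: `R` is a contraction in
`M_d ⊗ M`, `ψ` is a unit vector, and `⟨(R i 0)* X (R j 0) ψ, ψ⟩ = δ_{ij} (α i)² ⟨X ψ, ψ⟩`
for all `X ∈ M` and all `i, j`. -/
def MonopartiteProtocol (M : VonNeumannAlgebra H) {d : ℕ} [NeZero d] (α : Fin d → ℝ)
    (R : Fin d → Fin d → H →L[ℂ] H) (ψ : H) : Prop :=
  IsContractionIn M R ∧ ‖ψ‖ = 1 ∧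
    ∀ X ∈ M, ∀ i j : Fin d,
      ⟪(adjoint (R i 0)) (X ((R j 0) ψ)), ψ⟫_ℂ
        = (if i = j then ((α i : ℂ)) ^ 2 else 0) * ⟪X ψ, ψ⟫_ℂ

/-- The orthogonal projection of `H` onto the closure of `{Y ψ : Y ∈ S}`, as an operator
on `H`. -/
noncomputable def suppProjOn (S : Set (H →L[ℂ] H)) (ψ : H) : H →L[ℂ] H :=
  letI K := (Submodule.span ℂ ((fun Y : H →L[ℂ] H => Y ψ) '' S)).topologicalClosure
  K.subtypeL ∘L (Submodule.orthogonalProjection K : H →L[ℂ] K)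

/-- The support projection of the state `⟨· ψ, ψ⟩` on `M`: the orthogonal projection onto
the closure of `M' ψ`. -/
noncomputable def suppP (M : VonNeumannAlgebra H) (ψ : H) : H →L[ℂ] H :=
  suppProjOn (M.commutant : Set (H →L[ℂ] H)) ψ

/-- The support projection of the state `⟨· ψ, ψ⟩` on `M'`: the orthogonal projection onto
the closure of `M ψ`. -/
noncomputable def suppP' (M : VonNeumannAlgebra H) (ψ : H) : H →L[ℂ] H :=
  suppProjOn (M : Set (H →L[ℂ] H)) ψ


/-!
Because `P ∈ M` fixes `ψ`, compressing the test operator `X ∈ M` to `P X P ∈ M` shows that the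
condition for `R` implies the one for `P R P`. Conversely, the compressed condition at `X = 1`
gives `‖P (R j 0 ψ)‖² = (α j)²`, which sum to `1`; since the first column of the contraction `R`
has `∑ ‖R j 0 ψ‖² ≤ 1` and `P` does not increase norms, `P` must fix every `R j 0 ψ`.
The projection `P'` fixes `M ψ`, so it does not change the condition at all, and
`Q (R j 0 ψ) = P (R j 0 ψ)` reduces the case of `Q` to that of `P`.
-/

namespace IsStarProjection

variable {𝕜 E : Type*} [RCLike 𝕜] [NormedAddCommGroup E] [InnerProductSpace 𝕜 E]
  [CompleteSpace E] {p : E →L[𝕜] E}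

theorem apply_apply (hp : IsStarProjection p) (x : E) : p (p x) = p x :=
  congr($(hp.isIdempotentElem.eq) x)

theorem inner_apply_left (hp : IsStarProjection p) (x y : E) :
    inner 𝕜 (p x) y = inner 𝕜 x (p y) :=
  hp.isSelfAdjoint.isSymmetric x y

theorem norm_apply_le (hp : IsStarProjection p) (x : E) : ‖p x‖ ≤ ‖x‖ := by
  obtain ⟨K, _, rfl⟩ := isStarProjection_iff_eq_starProjection.mp hp
  exact K.norm_starProjection_apply_le x

theorem apply_eq_self_of_norm_eq (hp : IsStarProjection p) {x : E} (hx : ‖p x‖ = ‖x‖) :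
    p x = x := by
  obtain ⟨K, _, rfl⟩ := isStarProjection_iff_eq_starProjection.mp hp
  exact K.starProjection_eq_self_iff.mpr ((K.mem_iff_norm_starProjection x).mpr hx)

theorem apply_eq_self_of_sum_norm_sq_le (hp : IsStarProjection p) {ι : Type*} [Fintype ι]
    {v : ι → E} (hv : ∑ i, ‖v i‖ ^ 2 ≤ ∑ i, ‖p (v i)‖ ^ 2) (i : ι) : p (v i) = v i := by
  have hle : ∀ j, ‖p (v j)‖ ^ 2 ≤ ‖v j‖ ^ 2 := fun j => by
    gcongr; exact hp.norm_apply_le (v j)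
  have hsq : ‖p (v i)‖ ^ 2 = ‖v i‖ ^ 2 :=
    (Finset.sum_eq_sum_iff_of_le fun j _ => hle j).mp
      (le_antisymm (Finset.sum_le_sum fun j _ => hle j) hv) i (Finset.mem_univ i)
  exact hp.apply_eq_self_of_norm_eq <|
    (sq_eq_sq₀ (norm_nonneg _) (norm_nonneg _)).mp hsq

end IsStarProjection

theorem sum_norm_sq_apply_le_of_norm_blockOp_le_one {H : Type*} [NormedAddCommGroup H]
    [InnerProductSpace ℂ H] {d : ℕ} {R : Fin d → Fin d → H →L[ℂ] H} (hR : ‖blockOp R‖ ≤ 1)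
    (k : Fin d) (x : H) : ∑ i, ‖R i k x‖ ^ 2 ≤ ‖x‖ ^ 2 := by
  have hcol : blockOp R (PiLp.single 2 k x) = WithLp.toLp 2 fun i => R i k x := by
    ext i
    simp [blockOp, apply_ite]
  have hle := (blockOp R).le_of_opNorm_le hR (PiLp.single 2 k x)
  rw [hcol, PiLp.norm_single, one_mul] at hle
  calc ∑ i, ‖R i k x‖ ^ 2 = ‖WithLp.toLp 2 fun i => R i k x‖ ^ 2 := by
        rw [PiLp.norm_sq_eq_of_L2]
    _ ≤ ‖x‖ ^ 2 := by gcongr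

section SupportProjection

theorem suppProjOn_eq_starProjection (S : Set (H →L[ℂ] H)) (ψ : H) :
    suppProjOn S ψ =
      (Submodule.span ℂ ((fun Y : H →L[ℂ] H => Y ψ) '' S)).topologicalClosure.starProjection :=
  rfl

theorem isStarProjection_suppProjOn (S : Set (H →L[ℂ] H)) (ψ : H) :
    IsStarProjection (suppProjOn S ψ) := by
  rw [suppProjOn_eq_starProjection]
  exact isStarProjection_starProjection

theorem suppProjOn_apply_of_mem {S : Set (H →L[ℂ] H)} (ψ : H) {Y : H →L[ℂ] H} (hY : Y ∈ S) :
    suppProjOn S ψ (Y ψ) = Y ψ := by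
  rw [suppProjOn_eq_starProjection, Submodule.starProjection_eq_self_iff]
  exact Submodule.le_topologicalClosure _ (Submodule.subset_span ⟨Y, hY, rfl⟩)

theorem suppProjOn_mem_commutant (N : VonNeumannAlgebra H) (ψ : H) :
    suppProjOn (N : Set (H →L[ℂ] H)) ψ ∈ N.commutant := by
  rw [VonNeumannAlgebra.IsStarProjection.mem_iff (isStarProjection_suppProjOn _ ψ),
    VonNeumannAlgebra.commutant_commutant]
  intro y hy
  set V := Submodule.span ℂ ((fun Y : H →L[ℂ] H => Y ψ) '' N)
  have hV : V ≤ V.comap (y : H →ₗ[ℂ] H) := Submodule.span_le.mpr <| by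
    rintro _ ⟨Y, hY, rfl⟩
    exact Submodule.subset_span ⟨y * Y, mul_mem hy hY, rfl⟩
  rw [suppProjOn_eq_starProjection, Submodule.range_starProjection, Module.End.mem_invtSubmodule]
  exact Submodule.topologicalClosure_minimal _ (hV.trans (Submodule.comap_mono
    V.le_topologicalClosure)) (V.isClosed_topologicalClosure.preimage y.continuous)

theorem suppP_mem (M : VonNeumannAlgebra H) (ψ : H) : suppP M ψ ∈ M := by
  have h := suppProjOn_mem_commutant M.commutant ψ
  rwa [VonNeumannAlgebra.commutant_commutant] at h

theorem suppP_apply_self (M : VonNeumannAlgebra H) (ψ : H) : suppP M ψ ψ = ψ :=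
  suppProjOn_apply_of_mem ψ (one_mem M.commutant)

theorem suppP'_apply_of_mem {M : VonNeumannAlgebra H} (ψ : H) {Y : H →L[ℂ] H} (hY : Y ∈ M) :
    suppP' M ψ (Y ψ) = Y ψ :=
  suppProjOn_apply_of_mem ψ hY

end SupportProjection

section EmbezzlingFamily

variable {M : VonNeumannAlgebra H} {ι : Type*} [DecidableEq ι] {α : ι → ℝ} {ψ : H} {v : ι → H}

/-- For `v j = R j 0 ψ` this is the monopartite embezzlement condition
`⟨(R i 0)* X (R j 0) ψ, ψ⟩ = δ_{ij} (α i)² ⟨X ψ, ψ⟩`. -/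
def IsEmbezzlingFamily (M : VonNeumannAlgebra H) (α : ι → ℝ) (ψ : H) (v : ι → H) : Prop :=
  ∀ X ∈ M, ∀ i j, ⟪X (v j), v i⟫_ℂ = (if i = j then (α i : ℂ) ^ 2 else 0) * ⟪X ψ, ψ⟫_ℂ

theorem isEmbezzlingFamily_iff_inner_adjoint (A : ι → H →L[ℂ] H) :
    IsEmbezzlingFamily M α ψ (fun j => A j ψ) ↔
      ∀ X ∈ M, ∀ i j, ⟪adjoint (A i) (X (A j ψ)), ψ⟫_ℂ
        = (if i = j then (α i : ℂ) ^ 2 else 0) * ⟪X ψ, ψ⟫_ℂ := by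
  simp only [IsEmbezzlingFamily, adjoint_inner_left]

theorem isEmbezzlingFamily_apply_iff_inner_adjoint_compress {p : H →L[ℂ] H}
    (hp : IsStarProjection p) (hpψ : p ψ = ψ) (A : ι → H →L[ℂ] H) :
    IsEmbezzlingFamily M α ψ (fun j => p (A j ψ)) ↔
      ∀ X ∈ M, ∀ i j, ⟪adjoint (p ∘L A i ∘L p) ((p ∘L X ∘L p) ((p ∘L A j ∘L p) ψ)), ψ⟫_ℂ
        = (if i = j then (α i : ℂ) ^ 2 else 0) * ⟪(p ∘L X ∘L p) ψ, ψ⟫_ℂ := by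
  simp only [IsEmbezzlingFamily, adjoint_inner_left, comp_apply, hpψ, hp.inner_apply_left,
    hp.apply_apply]

theorem IsEmbezzlingFamily.norm_sq (h : IsEmbezzlingFamily M α ψ v) (hψ : ‖ψ‖ = 1) (i : ι) :
    ‖v i‖ ^ 2 = α i ^ 2 := by
  have hi := h 1 (one_mem M) i i
  rw [if_pos rfl, one_apply_eq_self, one_apply_eq_self, inner_self_eq_norm_sq_to_K,
    inner_self_eq_norm_sq_to_K, hψ] at hi
  apply Complex.ofReal_injective
  simpa using hi

theorem IsEmbezzlingFamily.apply_of_isStarProjection (h : IsEmbezzlingFamily M α ψ v)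
    {p : H →L[ℂ] H} (hp : IsStarProjection p) (hpM : p ∈ M) (hpψ : p ψ = ψ) :
    IsEmbezzlingFamily M α ψ (fun j => p (v j)) := by
  intro X hX i j
  have hpXp := h (p * X * p) (mul_mem (mul_mem hpM hX) hpM) i j
  simpa only [mul_apply_eq_comp, hp.inner_apply_left, hpψ] using hpXp

theorem IsEmbezzlingFamily.of_apply_of_isStarProjection [Fintype ι] {p : H →L[ℂ] H}
    (hp : IsStarProjection p) (h : IsEmbezzlingFamily M α ψ (fun j => p (v j)))
    (hψ : ‖ψ‖ = 1) (hα : ∑ i, α i ^ 2 = 1) (hv : ∑ i, ‖v i‖ ^ 2 ≤ 1) :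
    IsEmbezzlingFamily M α ψ v := by
  have hfix : ∀ i, p (v i) = v i := hp.apply_eq_self_of_sum_norm_sq_le <| by
    simpa only [h.norm_sq hψ, hα] using hv
  simpa only [hfix] using h

theorem isEmbezzlingFamily_apply_iff_of_isStarProjection [Fintype ι] {p : H →L[ℂ] H}
    (hp : IsStarProjection p) (hpM : p ∈ M) (hpψ : p ψ = ψ) (hψ : ‖ψ‖ = 1)
    (hα : ∑ i, α i ^ 2 = 1) (hv : ∑ i, ‖v i‖ ^ 2 ≤ 1) :
    IsEmbezzlingFamily M α ψ (fun j => p (v j)) ↔ IsEmbezzlingFamily M α ψ v :=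
  ⟨fun h => h.of_apply_of_isStarProjection hp hψ hα hv,
    fun h => h.apply_of_isStarProjection hp hpM hpψ⟩

end EmbezzlingFamily

theorem compressed_monopartite_embezzlement_general
    {H : Type*} [NormedAddCommGroup H] [InnerProductSpace ℂ H] [CompleteSpace H]
    (M : VonNeumannAlgebra H) {d : ℕ} [NeZero d]
    (α : Fin d → ℝ) (hsum : ∑ i, (α i) ^ 2 = 1)
    (R : Fin d → Fin d → H →L[ℂ] H) (hR : IsContractionIn M R)
    (ψ : H) (hψ : ‖ψ‖ = 1)
    (P P' Q : H →L[ℂ] H) (hP : P = suppP M ψ) (hP' : P' = suppP' M ψ)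
    (hQ : Q = P ∘L P') :
    ((∀ X ∈ M, ∀ i j : Fin d,
        ⟪(adjoint (R i 0)) (X ((R j 0) ψ)), ψ⟫_ℂ
          = (if i = j then ((α i : ℂ)) ^ 2 else 0) * ⟪X ψ, ψ⟫_ℂ) ↔
      (∀ X ∈ M, ∀ i j : Fin d,
        ⟪(adjoint (P ∘L (R i 0) ∘L P)) ((P ∘L X ∘L P) ((P ∘L (R j 0) ∘L P) ψ)), ψ⟫_ℂ
          = (if i = j then ((α i : ℂ)) ^ 2 else 0) * ⟪(P ∘L X ∘L P) ψ, ψ⟫_ℂ)) ∧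
    ((∀ X ∈ M, ∀ i j : Fin d,
        ⟪(adjoint (R i 0)) (X ((R j 0) ψ)), ψ⟫_ℂ
          = (if i = j then ((α i : ℂ)) ^ 2 else 0) * ⟪X ψ, ψ⟫_ℂ) ↔
      (∀ X ∈ M, ∀ i j : Fin d,
        ⟪(adjoint (P' ∘L (R i 0) ∘L P')) ((P' ∘L X ∘L P') ((P' ∘L (R j 0) ∘L P') ψ)), ψ⟫_ℂ
          = (if i = j then ((α i : ℂ)) ^ 2 else 0) * ⟪(P' ∘L X ∘L P') ψ, ψ⟫_ℂ)) ∧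
    ((∀ X ∈ M, ∀ i j : Fin d,
        ⟪(adjoint (R i 0)) (X ((R j 0) ψ)), ψ⟫_ℂ
          = (if i = j then ((α i : ℂ)) ^ 2 else 0) * ⟪X ψ, ψ⟫_ℂ) ↔
      (∀ X ∈ M, ∀ i j : Fin d,
        ⟪(adjoint (Q ∘L (R i 0) ∘L Q)) ((Q ∘L X ∘L Q) ((Q ∘L (R j 0) ∘L Q) ψ)), ψ⟫_ℂ
          = (if i = j then ((α i : ℂ)) ^ 2 else 0) * ⟪(Q ∘L X ∘L Q) ψ, ψ⟫_ℂ)) := by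
  have hv : ∑ j, ‖R j 0 ψ‖ ^ 2 ≤ 1 := by
    simpa only [hψ, one_pow] using sum_norm_sq_apply_le_of_norm_blockOp_le_one hR.2 0 ψ
  have hPproj : IsStarProjection P := hP ▸ isStarProjection_suppProjOn _ ψ
  have hPM : P ∈ M := hP ▸ suppP_mem M ψ
  have hPψ : P ψ = ψ := hP ▸ suppP_apply_self M ψ
  have hP'proj : IsStarProjection P' := hP' ▸ isStarProjection_suppProjOn _ ψ
  have hP'M : P' ∈ M.commutant := hP' ▸ suppProjOn_mem_commutant M ψ
  have hP'ψ : P' ψ = ψ := hP' ▸ suppP'_apply_of_mem ψ (one_mem M)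
  have hP'v : ∀ j, P' (R j 0 ψ) = R j 0 ψ := fun j => hP' ▸ suppP'_apply_of_mem ψ (hR.1 j 0)
  have hQproj : IsStarProjection Q :=
    hQ ▸ hPproj.mul hP'proj (VonNeumannAlgebra.mem_commutant_iff.mp hP'M P hPM)
  have hQψ : Q ψ = ψ := by rw [hQ, comp_apply, hP'ψ, hPψ]
  have hQv : ∀ j, Q (R j 0 ψ) = P (R j 0 ψ) := fun j => by rw [hQ, comp_apply, hP'v]
  rw [← isEmbezzlingFamily_iff_inner_adjoint (fun i => R i 0),
    ← isEmbezzlingFamily_apply_iff_inner_adjoint_compress hPproj hPψ (fun i => R i 0),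
    ← isEmbezzlingFamily_apply_iff_inner_adjoint_compress hP'proj hP'ψ (fun i => R i 0),
    ← isEmbezzlingFamily_apply_iff_inner_adjoint_compress hQproj hQψ (fun i => R i 0)]
  simp only [hP'v, hQv,
    isEmbezzlingFamily_apply_iff_of_isStarProjection hPproj hPM hPψ hψ hsum hv, iff_self, and_self]

/-- A monopartite exact embezzlement protocol compresses to one on `P M P`, on `P' M P'`
and on `Q M Q`, and conversely, where `P`, `P'` are the support projections of `⟨· ψ, ψ⟩`
on `M`, `M'` respectively and `Q = P P'`. -/
theorem compressed_monopartite_embezzlement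
    {H : Type*} [NormedAddCommGroup H] [InnerProductSpace ℂ H] [CompleteSpace H]
    (M : VonNeumannAlgebra H) {d : ℕ} [NeZero d] (hd : 2 ≤ d)
    (α : Fin d → ℝ) (hα : ∀ i, 0 < α i) (hsum : ∑ i, (α i) ^ 2 = 1)
    (R : Fin d → Fin d → H →L[ℂ] H) (hR : IsContractionIn M R)
    (ψ : H) (hψ : ‖ψ‖ = 1)
    (P P' Q : H →L[ℂ] H) (hP : P = suppP M ψ) (hP' : P' = suppP' M ψ)
    (hQ : Q = P ∘L P') :
    ((∀ X ∈ M, ∀ i j : Fin d,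
        ⟪(adjoint (R i 0)) (X ((R j 0) ψ)), ψ⟫_ℂ
          = (if i = j then ((α i : ℂ)) ^ 2 else 0) * ⟪X ψ, ψ⟫_ℂ) ↔
      (∀ X ∈ M, ∀ i j : Fin d,
        ⟪(adjoint (P ∘L (R i 0) ∘L P)) ((P ∘L X ∘L P) ((P ∘L (R j 0) ∘L P) ψ)), ψ⟫_ℂ
          = (if i = j then ((α i : ℂ)) ^ 2 else 0) * ⟪(P ∘L X ∘L P) ψ, ψ⟫_ℂ)) ∧
    ((∀ X ∈ M, ∀ i j : Fin d,
        ⟪(adjoint (R i 0)) (X ((R j 0) ψ)), ψ⟫_ℂ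
          = (if i = j then ((α i : ℂ)) ^ 2 else 0) * ⟪X ψ, ψ⟫_ℂ) ↔
      (∀ X ∈ M, ∀ i j : Fin d,
        ⟪(adjoint (P' ∘L (R i 0) ∘L P')) ((P' ∘L X ∘L P') ((P' ∘L (R j 0) ∘L P') ψ)), ψ⟫_ℂ
          = (if i = j then ((α i : ℂ)) ^ 2 else 0) * ⟪(P' ∘L X ∘L P') ψ, ψ⟫_ℂ)) ∧
    ((∀ X ∈ M, ∀ i j : Fin d,
        ⟪(adjoint (R i 0)) (X ((R j 0) ψ)), ψ⟫_ℂ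
          = (if i = j then ((α i : ℂ)) ^ 2 else 0) * ⟪X ψ, ψ⟫_ℂ) ↔
      (∀ X ∈ M, ∀ i j : Fin d,
        ⟪(adjoint (Q ∘L (R i 0) ∘L Q)) ((Q ∘L X ∘L Q) ((Q ∘L (R j 0) ∘L Q) ψ)), ψ⟫_ℂ
          = (if i = j then ((α i : ℂ)) ^ 2 else 0) * ⟪(Q ∘L X ∘L Q) ψ, ψ⟫_ℂ)) :=
  compressed_monopartite_embezzlement_general M α hsum R hR ψ hψ P P' Q hP hP' hQ
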